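/- On the elliptic curve E : y^2 + 6244332976·xy + 2204421250641922174556630375·y = x^3 over Q, the point (0,0) is a rational point of order exactly 3, and the point with x-coordinate 2907919170263662 is a rational point of E (i.e. there exists a rational y making (2907919170263662, y) a point on E). -/

import Mathlib

def E : WeierstrassCurve.Affine ℚ :=
  ⟨6244332976, 0, 2204421250641922174556630375, 0, 0⟩

namespace WeierstrassCurve.Affine

variable {F : Type*} [Field F] {W : Affine F}

lemma nonsingular_zero_zero (h₆ : W.a₆ = 0) (h₃ : W.a₃ ≠ 0) : W.Nonsingular 0 0 :=
  nonsingular_zero.mpr ⟨h₆, .inl h₃⟩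

namespace Point

variable [DecidableEq F]

/- `(0, 0)` is a flex: the tangent there is `Y = 0` because `a₄ = 0`, and it meets the cubic only
at `X = 0` because `a₂ = a₆ = 0`. -/
lemma some_zero_zero_add_self (h₂ : W.a₂ = 0) (h₄ : W.a₄ = 0) (h₃ : W.a₃ ≠ 0)
    (h : W.Nonsingular 0 0) : some 0 0 h + some 0 0 h = -some 0 0 h := by
  have hy : (0 : F) ≠ W.negY 0 0 := by simpa [negY, eq_comm] using h₃
  have hslope : W.slope 0 0 0 0 = 0 := by simp [slope_of_Y_ne rfl hy, h₂, h₄]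
  rw [add_self_of_Y_ne' hy]
  simp only [hslope, addX, negAddY, h₂]
  norm_num

lemma addOrderOf_some_zero_zero (h₂ : W.a₂ = 0) (h₄ : W.a₄ = 0) (h₃ : W.a₃ ≠ 0)
    (h : W.Nonsingular 0 0) : addOrderOf (some 0 0 h) = 3 := by
  have : Fact (Nat.Prime 3) := ⟨Nat.prime_three⟩
  refine addOrderOf_eq_prime ?_ (some_ne_zero h)
  rw [succ_nsmul, two_nsmul, some_zero_zero_add_self h₂ h₄ h₃, neg_add_cancel]

end Point

end WeierstrassCurve.Affine

open WeierstrassCurve.Affine in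
/-- On `E`, the point `(0,0)` has order exactly 3, and `x = 2907919170263662` is the
`x`-coordinate of a rational point of `E`. -/
theorem order_three_and_point :
    (∃ h : E.Nonsingular 0 0, addOrderOf (WeierstrassCurve.Affine.Point.some _ _ h) = 3) ∧
    ∃ y : ℚ, E.Nonsingular 2907919170263662 y := by
  have h₃ : E.a₃ ≠ 0 := by norm_num [E]
  refine ⟨⟨nonsingular_zero_zero rfl h₃, Point.addOrderOf_some_zero_zero rfl rfl h₃ _⟩,
    11063428431634804552, ?_⟩
  rw [nonsingular_iff, equation_iff]
  norm_num [E]
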